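/- arXiv:1202.2820 — 2 statements merged into one kernel-verified Lean document; each statement's English description precedes it below -/
import Mathlib

section
/- Let ω_1, …, ω_m be 2-clauses over n Boolean variables, let f_1, …, f_N be strings in P_n, and let x : Fin n → Bool be an assignment satisfying exactly k of the m clauses. Then the string x̂ is within Hamming distance n of exactly N + k of the N + m strings f_1, …, f_N, s_{ω_1}, …, s_{ω_m}: it has distance exactly n from each f_i, distance at most n from s_{ω_j} for each satisfied clause ω_j, and distance n + 2 from s_{ω_j} for each unsatisfied clause ω_j. -/
def pairFst {n : ℕ} (j : Fin n) : Fin (2*n) := ⟨2*j.val, by omega⟩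
def pairSnd {n : ℕ} (j : Fin n) : Fin (2*n) := ⟨2*j.val+1, by omega⟩
def halfIdx {n : ℕ} (p : Fin (2*n)) : Fin n := ⟨p.val / 2, by omega⟩
def clauseStr {n : ℕ} (i₁ i₂ : Fin n) (b₁ b₂ : Bool) : Fin (2*n) → Bool :=
  fun p => if halfIdx p = i₁ then b₁ else if halfIdx p = i₂ then b₂
           else decide (p.val % 2 = 1)
def hatStr {n : ℕ} (x : Fin n → Bool) : Fin (2*n) → Bool := fun p => x (halfIdx p)

def pairEquiv (n : ℕ) : Fin n × Fin 2 ≃ Fin (2*n) where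
  toFun q := ⟨2*q.1.val + q.2.val, by omega⟩
  invFun p := (halfIdx p, ⟨p.val % 2, by omega⟩)
  left_inv q := by
    rcases q with ⟨j, c⟩
    ext <;> simp [halfIdx] <;> omega
  right_inv p := by
    ext; simp [halfIdx]; omega

lemma pairSum {n : ℕ} (s t : Fin (2*n) → Bool) :
    hammingDist s t = ∑ j : Fin n,
      ((if s (pairFst j) = t (pairFst j) then 0 else 1) +
       (if s (pairSnd j) = t (pairSnd j) then 0 else 1)) := by
  have h : hammingDist s t = ∑ p : Fin (2*n), (if s p = t p then 0 else 1) := by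
    rw [hammingDist, Finset.card_filter]
    exact Finset.sum_congr rfl (fun p _ => by by_cases h : s p = t p <;> simp [h])
  rw [h, ← Equiv.sum_comp (pairEquiv n) (fun p => if s p = t p then 0 else 1),
    Fintype.sum_prod_type]
  refine Finset.sum_congr rfl fun j _ => ?_
  rw [Fin.sum_univ_two]
  congr 1

lemma halfIdx_pairFst {n : ℕ} (j : Fin n) : halfIdx (pairFst j) = j :=
  Fin.ext (by simp [halfIdx, pairFst])
lemma halfIdx_pairSnd {n : ℕ} (j : Fin n) : halfIdx (pairSnd j) = j :=
  Fin.ext (by simp [halfIdx, pairSnd]; omega)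

lemma hat_dist_flip {n : ℕ} (x : Fin n → Bool) (g : Fin (2*n) → Bool)
    (hg : ∀ j : Fin n, g (pairFst j) ≠ g (pairSnd j)) :
    hammingDist (hatStr x) g = n := by
  rw [pairSum]
  have : ∀ j : Fin n,
      ((if hatStr x (pairFst j) = g (pairFst j) then 0 else 1) +
       (if hatStr x (pairSnd j) = g (pairSnd j) then 0 else 1)) = 1 := by
    intro j
    have h := hg j
    simp only [hatStr, halfIdx_pairFst, halfIdx_pairSnd]
    cases hxa : x j <;> cases ha : g (pairFst j) <;> cases hb : g (pairSnd j) <;>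
      simp_all
  simp [this]

lemma hat_dist_clause {n : ℕ} (x : Fin n → Bool) (i₁ i₂ : Fin n) (b₁ b₂ : Bool)
    (hne : i₁ ≠ i₂) :
    hammingDist (hatStr x) (clauseStr i₁ i₂ b₁ b₂) =
      (n - 2) + ((if x i₁ = b₁ then 0 else 2) + (if x i₂ = b₂ then 0 else 2)) := by
  rw [pairSum]
  have hterm : ∀ j : Fin n,
      ((if hatStr x (pairFst j) = clauseStr i₁ i₂ b₁ b₂ (pairFst j) then 0 else 1) +
       (if hatStr x (pairSnd j) = clauseStr i₁ i₂ b₁ b₂ (pairSnd j) then 0 else 1)) =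
      (if j = i₁ then (if x i₁ = b₁ then 0 else 2)
       else if j = i₂ then (if x i₂ = b₂ then 0 else 2) else 1) := by
    intro j
    have h1 : ¬((pairFst j).val % 2 = 1) := by simp only [pairFst]; omega
    have h2 : (pairSnd j).val % 2 = 1 := by simp only [pairSnd]; omega
    simp only [hatStr, clauseStr, halfIdx_pairFst, halfIdx_pairSnd]
    by_cases hj1 : j = i₁
    · subst hj1; by_cases hx : x j = b₁ <;> simp [hx]
    · by_cases hj2 : j = i₂
      · subst hj2; simp [hj1]; by_cases hx : x j = b₂ <;> simp [hx]
      · simp [hj1, hj2, h1, h2]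
        cases hx : x j <;> simp
  rw [Finset.sum_congr rfl (fun j _ => hterm j)]
  rw [← Finset.sum_add_sum_compl ({i₁, i₂} : Finset (Fin n))]
  have hA : ∑ j ∈ ({i₁, i₂} : Finset (Fin n)),
      (if j = i₁ then (if x i₁ = b₁ then 0 else 2)
       else if j = i₂ then (if x i₂ = b₂ then 0 else 2) else 1) =
      (if x i₁ = b₁ then 0 else 2) + (if x i₂ = b₂ then 0 else 2) := by
    rw [Finset.sum_pair hne]
    simp [hne, Ne.symm hne]
  have hB : ∑ j ∈ ({i₁, i₂} : Finset (Fin n))ᶜ,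
      (if j = i₁ then (if x i₁ = b₁ then 0 else 2)
       else if j = i₂ then (if x i₂ = b₂ then 0 else 2) else 1) = n - 2 := by
    rw [Finset.sum_congr rfl (fun j hj => ?_)]
    · rw [Finset.sum_const, smul_eq_mul, mul_one, Finset.card_compl,
        Finset.card_pair hne, Fintype.card_fin]
    · simp only [Finset.mem_compl, Finset.mem_insert, Finset.mem_singleton, not_or] at hj
      simp [hj.1, hj.2]
  rw [hA, hB, Nat.add_comm]

/-- Given 2-clauses `ω_1, …, ω_m` (the `j`-th clause being `(i₁ j, b₁ j, i₂ j, b₂ j)`),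
strings `f_1, …, f_N ∈ P_n`, and an assignment `x` satisfying exactly `k` clauses:
`x̂` has distance exactly `n` from each `f_i`, distance at most `n` from `s_{ω_j}` for
each satisfied clause, distance `n+2` from `s_{ω_j}` for each unsatisfied clause, and
altogether is within distance `n` of exactly `N + k` of the `N + m` strings. -/
theorem stmt6 (n m N : ℕ) (i₁ i₂ : Fin m → Fin n) (hne : ∀ j, i₁ j ≠ i₂ j)
    (b₁ b₂ : Fin m → Bool)
    (f : Fin N → (Fin (2*n) → Bool))
    (hf : ∀ i, ∀ j : Fin n, f i (pairFst j) ≠ f i (pairSnd j))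
    (x : Fin n → Bool) (k : ℕ)
    (hk : k = (Finset.univ.filter
        (fun j : Fin m => x (i₁ j) = b₁ j ∨ x (i₂ j) = b₂ j)).card) :
    (∀ i, hammingDist (hatStr x) (f i) = n) ∧
    (∀ j, (x (i₁ j) = b₁ j ∨ x (i₂ j) = b₂ j) →
      hammingDist (hatStr x) (clauseStr (i₁ j) (i₂ j) (b₁ j) (b₂ j)) ≤ n) ∧
    (∀ j, ¬(x (i₁ j) = b₁ j ∨ x (i₂ j) = b₂ j) →
      hammingDist (hatStr x) (clauseStr (i₁ j) (i₂ j) (b₁ j) (b₂ j)) = n + 2) ∧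
    (Finset.univ.filter (fun i : Fin N => hammingDist (hatStr x) (f i) ≤ n)).card +
      (Finset.univ.filter (fun j : Fin m =>
        hammingDist (hatStr x) (clauseStr (i₁ j) (i₂ j) (b₁ j) (b₂ j)) ≤ n)).card
      = N + k := by
  have h1 : ∀ i, hammingDist (hatStr x) (f i) = n := fun i => hat_dist_flip x (f i) (hf i)
  have h2 : ∀ j, (x (i₁ j) = b₁ j ∨ x (i₂ j) = b₂ j) →
      hammingDist (hatStr x) (clauseStr (i₁ j) (i₂ j) (b₁ j) (b₂ j)) ≤ n := by
    intro j hj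
    have hn2 : 2 ≤ n := by
      have hv : (i₁ j).val ≠ (i₂ j).val := fun h => hne j (Fin.ext h)
      have ha := (i₁ j).isLt; have hb := (i₂ j).isLt
      omega
    rw [hat_dist_clause x _ _ _ _ (hne j)]
    have hb : (if x (i₁ j) = b₁ j then 0 else 2) + (if x (i₂ j) = b₂ j then 0 else 2) ≤ 2 := by
      rcases hj with hj | hj <;> rw [if_pos hj] <;> split <;> omega
    omega
  have h3 : ∀ j, ¬(x (i₁ j) = b₁ j ∨ x (i₂ j) = b₂ j) →
      hammingDist (hatStr x) (clauseStr (i₁ j) (i₂ j) (b₁ j) (b₂ j)) = n + 2 := by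
    intro j hj
    push_neg at hj
    have hn2 : 2 ≤ n := by
      have hv : (i₁ j).val ≠ (i₂ j).val := fun h => hne j (Fin.ext h)
      have h1 := (i₁ j).isLt; have h2 := (i₂ j).isLt
      omega
    rw [hat_dist_clause x _ _ _ _ (hne j)]
    simp [hj.1, hj.2]
    omega
  refine ⟨h1, h2, h3, ?_⟩
  have e1 : (Finset.univ.filter (fun i : Fin N => hammingDist (hatStr x) (f i) ≤ n)).card
      = N := by
    rw [Finset.filter_true_of_mem (fun i _ => by rw [h1 i]), Finset.card_univ,
      Fintype.card_fin]
  have e2 : (Finset.univ.filter (fun j : Fin m =>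
        hammingDist (hatStr x) (clauseStr (i₁ j) (i₂ j) (b₁ j) (b₂ j)) ≤ n)).card = k := by
    rw [hk]
    congr 1
    apply Finset.filter_congr
    intro j _
    constructor
    · intro h
      by_contra hc
      rw [h3 j hc] at h; omega
    · exact h2 j
  rw [e1, e2]
end

section
/- Let G be a simple graph on vertex set Fin L, let k ≤ L be a natural number, and let S be the finite set of strings consisting of the all-false string 0 together with the incidence strings χ(e) of all edges e of G. Then the maximum, over all subsets T ⊆ S having at most k bad columns, of |T|, equals 1 plus the maximum, over all vertex subsets U with |U| = k, of |E[U]| (the number of edges of G with both endpoints in U). -/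
/-- The incidence string of an edge `e`: `true` exactly at the endpoints of `e`. -/
def chi {L : ℕ} (e : Sym2 (Fin L)) : Fin L → Bool := fun i => decide (i ∈ e)

/-- The set of bad columns of a finite set `T` of strings: columns where not all
strings of `T` agree. -/
def badCols {L : ℕ} (T : Finset (Fin L → Bool)) : Finset (Fin L) :=
  Finset.univ.filter (fun t => ∃ u ∈ T, ∃ v ∈ T, u t ≠ v t)

lemma chi_eq_true {L : ℕ} (e : Sym2 (Fin L)) (i : Fin L) : chi e i = true ↔ i ∈ e := by
  simp [chi]

lemma chi_injective {L : ℕ} : Function.Injective (chi (L := L)) := by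
  intro e f h
  apply Sym2.ext
  intro x
  rw [← chi_eq_true, ← chi_eq_true, h]

lemma mem_badCols {L : ℕ} (T : Finset (Fin L → Bool)) (t : Fin L) :
    t ∈ badCols T ↔ ∃ u ∈ T, ∃ v ∈ T, u t ≠ v t := by
  simp [badCols]

/-- Claim 1 (optimal values of the reduction): with `S` consisting of the all-false
string together with the incidence strings of the edges of `G`, and `k ≤ L`, the
maximum size of a subset `T ⊆ S` with at most `k` bad columns equals `1` plus the
maximum number of edges induced by a `k`-element vertex subset. -/
theorem stmt14 (L : ℕ) (G : SimpleGraph (Fin L)) [DecidableRel G.Adj] (k : ℕ)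
    (hk : k ≤ L)
    (S : Finset (Fin L → Bool))
    (hS : S = insert (fun _ => false) (G.edgeFinset.image chi)) :
    (S.powerset.filter (fun T => (badCols T).card ≤ k)).sup Finset.card
      = (Finset.powersetCard k (Finset.univ : Finset (Fin L))).sup
          (fun U => (G.edgeFinset.filter (fun e => ∀ v ∈ e, v ∈ U)).card) + 1 := by
  subst hS
  set zero : Fin L → Bool := fun _ => false with hzero
  have hchi_ne : ∀ e ∈ G.edgeFinset, chi e ≠ zero := by
    intro e he h
    induction e using Sym2.ind with
    | _ a b =>
      have : chi s(a, b) a = true := (chi_eq_true _ _).2 (by simp)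
      rw [h] at this
      simp [zero] at this
  apply le_antisymm
  · -- LHS ≤ RHS + 1
    apply Finset.sup_le
    intro T hT
    rw [Finset.mem_filter, Finset.mem_powerset] at hT
    obtain ⟨hTS, hTk⟩ := hT
    by_cases hT2 : T.card ≤ 1
    · omega
    push_neg at hT2
    set ET := G.edgeFinset.filter (fun e => chi e ∈ T) with hET
    have hETsub : ET ⊆ G.edgeFinset := Finset.filter_subset _ _
    have hTsub : T ⊆ insert zero (ET.image chi) := by
      intro u hu
      have := hTS hu
      rw [Finset.mem_insert] at this ⊢
      rcases this with h | h
      · exact Or.inl h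
      · obtain ⟨e, he, rfl⟩ := Finset.mem_image.1 h
        exact Or.inr (Finset.mem_image.2 ⟨e, Finset.mem_filter.2 ⟨he, hu⟩, rfl⟩)
    have hcard_ET : ∀ A : Finset (Sym2 (Fin L)), (A.image chi).card = A.card :=
      fun A => Finset.card_image_of_injective _ chi_injective
    by_cases hB : ∀ e ∈ ET, ∀ v ∈ e, v ∈ badCols T
    · -- subcase A: all endpoints bad
      obtain ⟨U, hBU, hUuniv, hUcard⟩ :=
        Finset.exists_subsuperset_card_eq (Finset.subset_univ (badCols T)) hTk
          (by simpa using hk)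
      have hUmem : U ∈ Finset.powersetCard k (Finset.univ : Finset (Fin L)) :=
        Finset.mem_powersetCard.2 ⟨hUuniv, hUcard⟩
      have hETU : ET ⊆ G.edgeFinset.filter (fun e => ∀ v ∈ e, v ∈ U) := by
        intro e he
        exact Finset.mem_filter.2 ⟨hETsub he, fun v hv => hBU (hB e he v hv)⟩
      have h1 : T.card ≤ ET.card + 1 := by
        calc T.card ≤ (insert zero (ET.image chi)).card := Finset.card_le_card hTsub
        _ ≤ (ET.image chi).card + 1 := Finset.card_insert_le _ _
        _ = ET.card + 1 := by rw [hcard_ET]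
      have h2 : ET.card ≤ (G.edgeFinset.filter (fun e => ∀ v ∈ e, v ∈ U)).card :=
        Finset.card_le_card hETU
      have h3 : (G.edgeFinset.filter (fun e => ∀ v ∈ e, v ∈ U)).card ≤
          (Finset.powersetCard k (Finset.univ : Finset (Fin L))).sup
            (fun U => (G.edgeFinset.filter (fun e => ∀ v ∈ e, v ∈ U)).card) := by
        have := Finset.le_sup (f := fun U => (G.edgeFinset.filter
          (fun e => ∀ v ∈ e, v ∈ U)).card) hUmem
        simpa using this
      omega
    · -- subcase B: some edge e₀ has an endpoint c not bad
      push_neg at hB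
      obtain ⟨e₀, he₀, c, hce₀, hcB⟩ := hB
      have hagree : ∀ u ∈ T, u c = true := by
        intro u hu
        by_contra h
        exact hcB ((mem_badCols T c).2 ⟨chi e₀, (Finset.mem_filter.1 he₀).2, u, hu,
          by rw [(chi_eq_true e₀ c).2 hce₀]; exact fun hh => h hh.symm⟩)
      have h0 : zero ∉ T := by
        intro h
        have := hagree zero h
        simp [zero] at this
      have hTsub' : T ⊆ ET.image chi := by
        intro u hu
        rcases Finset.mem_insert.1 (hTsub hu) with h | h
        · exact absurd (h ▸ hu) h0
        · exact h
      have hcET : ∀ e ∈ ET, c ∈ e := by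
        intro e he
        have := hagree (chi e) (Finset.mem_filter.1 he).2
        exact (chi_eq_true e c).1 this
      -- each e ∈ ET is s(c, v) for some v ≠ c
      have hform : ∀ e ∈ ET, ∃ v, e = s(c, v) ∧ v ≠ c := by
        intro e he
        refine ⟨Sym2.Mem.other' (hcET e he), (Sym2.other_spec' (hcET e he)).symm, ?_⟩
        intro hvc
        have hd : ¬ e.IsDiag := G.not_isDiag_of_mem_edgeSet
          (SimpleGraph.mem_edgeFinset.1 (hETsub he))
        rw [← Sym2.other_spec' (hcET e he), hvc] at hd
        exact hd (Sym2.mk_isDiag_iff.2 rfl)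
      have hETcard2 : 2 ≤ ET.card := by
        have : T.card ≤ ET.card := by
          calc T.card ≤ (ET.image chi).card := Finset.card_le_card hTsub'
          _ = ET.card := hcard_ET ET
        omega
      obtain ⟨e₁, he₁⟩ : ET.Nonempty := Finset.card_pos.1 (by omega)
      obtain ⟨v₁, hv₁, hv₁c⟩ := hform e₁ he₁
      -- v₁ is bad: pick another edge e₂
      have hv₁B : v₁ ∈ badCols T := by
        obtain ⟨e₂, he₂, hne⟩ := Finset.exists_mem_ne (show 1 < ET.card by omega) e₁
        obtain ⟨v₂, hv₂, hv₂c⟩ := hform e₂ he₂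
        refine (mem_badCols T v₁).2 ⟨chi e₁, (Finset.mem_filter.1 he₁).2,
          chi e₂, (Finset.mem_filter.1 he₂).2, ?_⟩
        have h1 : chi e₁ v₁ = true := (chi_eq_true _ _).2 (by rw [hv₁]; simp)
        have h2 : chi e₂ v₁ = false := by
          rw [← Bool.not_eq_true, chi_eq_true, hv₂, Sym2.mem_iff]
          push_neg
          refine ⟨hv₁c, ?_⟩
          intro hvv
          exact hne (by rw [hv₁, hv₂, hvv])
        rw [h1, h2]; simp
      -- the core vertex set
      set U₀ : Finset (Fin L) := insert c ((badCols T).erase v₁) with hU₀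
      have hU₀card : U₀.card ≤ k := by
        have h1 : U₀.card ≤ ((badCols T).erase v₁).card + 1 := Finset.card_insert_le _ _
        have h2 : ((badCols T).erase v₁).card = (badCols T).card - 1 :=
          Finset.card_erase_of_mem hv₁B
        have h3 : 1 ≤ (badCols T).card := Finset.card_pos.2 ⟨v₁, hv₁B⟩
        omega
      obtain ⟨U, hU₀U, hUuniv, hUcard⟩ :=
        Finset.exists_subsuperset_card_eq (Finset.subset_univ U₀) hU₀card
          (by simpa using hk)
      have hUmem : U ∈ Finset.powersetCard k (Finset.univ : Finset (Fin L)) :=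
        Finset.mem_powersetCard.2 ⟨hUuniv, hUcard⟩
      have hETU : ET.erase e₁ ⊆ G.edgeFinset.filter (fun e => ∀ v ∈ e, v ∈ U) := by
        intro e he
        obtain ⟨hne, heET⟩ := Finset.mem_erase.1 he
        obtain ⟨v, hv, hvc⟩ := hform e heET
        refine Finset.mem_filter.2 ⟨hETsub heET, ?_⟩
        intro w hw
        rw [hv, Sym2.mem_iff] at hw
        apply hU₀U
        rcases hw with rfl | rfl
        · exact Finset.mem_insert_self _ _
        · -- w = v; show v ∈ (badCols T).erase v₁
          have hvv₁ : w ≠ v₁ := by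
            intro hvv
            exact hne (by rw [hv, hv₁, hvv])
          have hvB : w ∈ badCols T := by
            refine (mem_badCols T w).2 ⟨chi e, (Finset.mem_filter.1 heET).2,
              chi e₁, (Finset.mem_filter.1 he₁).2, ?_⟩
            have h1 : chi e w = true := (chi_eq_true _ _).2 (by rw [hv]; simp)
            have h2 : chi e₁ w = false := by
              rw [← Bool.not_eq_true, chi_eq_true, hv₁, Sym2.mem_iff]
              push_neg
              exact ⟨hvc, hvv₁⟩
            rw [h1, h2]; simp
          exact Finset.mem_insert.2 (Or.inr (Finset.mem_erase.2 ⟨hvv₁, hvB⟩))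
      have h1 : T.card ≤ ET.card := by
        calc T.card ≤ (ET.image chi).card := Finset.card_le_card hTsub'
        _ = ET.card := hcard_ET ET
      have h2 : (ET.erase e₁).card = ET.card - 1 := Finset.card_erase_of_mem he₁
      have h3 : (ET.erase e₁).card ≤ (G.edgeFinset.filter (fun e => ∀ v ∈ e, v ∈ U)).card :=
        Finset.card_le_card hETU
      have h4 : (G.edgeFinset.filter (fun e => ∀ v ∈ e, v ∈ U)).card ≤
          (Finset.powersetCard k (Finset.univ : Finset (Fin L))).sup
            (fun U => (G.edgeFinset.filter (fun e => ∀ v ∈ e, v ∈ U)).card) := by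
        have := Finset.le_sup (f := fun U => (G.edgeFinset.filter
          (fun e => ∀ v ∈ e, v ∈ U)).card) hUmem
        simpa using this
      omega
  · -- RHS + 1 ≤ LHS
    obtain ⟨U, hUmem, hUsup⟩ := Finset.exists_mem_eq_sup
      (Finset.powersetCard k (Finset.univ : Finset (Fin L)))
      (Finset.powersetCard_nonempty.2 (by simpa using hk))
      (fun U => (G.edgeFinset.filter (fun e => ∀ v ∈ e, v ∈ U)).card)
    rw [hUsup]
    obtain ⟨hUuniv, hUcard⟩ := Finset.mem_powersetCard.1 hUmem
    set EU := G.edgeFinset.filter (fun e => ∀ v ∈ e, v ∈ U) with hEU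
    set T : Finset (Fin L → Bool) := insert zero (EU.image chi) with hT
    have hTmem : T ∈ (insert zero (G.edgeFinset.image chi)).powerset.filter
        (fun T => (badCols T).card ≤ k) := by
      rw [Finset.mem_filter, Finset.mem_powerset]
      constructor
      · exact Finset.insert_subset_insert _
          (Finset.image_subset_image (Finset.filter_subset _ _))
      · -- badCols T ⊆ U
        have hsub : badCols T ⊆ U := by
          intro t ht
          obtain ⟨u, hu, v, hv, huv⟩ := (mem_badCols T t).1 ht
          have key : ∀ w ∈ T, w t = true → t ∈ U := by
            intro w hw hwt
            rcases Finset.mem_insert.1 hw with rfl | hw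
            · simp [zero] at hwt
            · obtain ⟨e, he, rfl⟩ := Finset.mem_image.1 hw
              have := (chi_eq_true e t).1 hwt
              exact (Finset.mem_filter.1 he).2 t this
          rcases Bool.eq_false_or_eq_true (u t) with h | h
          · exact key u hu h
          · rcases Bool.eq_false_or_eq_true (v t) with h' | h'
            · exact key v hv h'
            · exact absurd (h.trans h'.symm) huv
        calc (badCols T).card ≤ U.card := Finset.card_le_card hsub
        _ = k := hUcard
    have hTcard : T.card = EU.card + 1 := by
      rw [hT, Finset.card_insert_of_notMem, Finset.card_image_of_injective _ chi_injective]
      intro h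
      obtain ⟨e, he, heq⟩ := Finset.mem_image.1 h
      exact hchi_ne e (Finset.filter_subset _ _ he) heq
    have := Finset.le_sup (f := Finset.card) hTmem
    omega
end
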